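/- arXiv:1306.2691 — 7 statements merged into one kernel-verified Lean document; each statement's English description precedes it below -/
import Mathlib

section
/- Let D be a set of databases with an adjacency relation ∼, let f' : D → ℝ^m, and let Δ = sup_{D₁∼D₂} d(f'(D₁), f'(D₂)) be finite, positive, and attained by some adjacent pair. Let X be a random variable on ℝ^m with Laplace density p(x) = K·e^{-b‖x‖} (b > 0, K > 0 the normalizing constant). If the mechanism A(D) = f'(D) + X is ε-differentially private (for all D₁ ∼ D₂ and all measurable S, P[f'(D₁)+X ∈ S] ≤ e^{ε} P[f'(D₂)+X ∈ S]), then Condition 1 holds with degree ε and sensitivity Δ: for all measurable S and all r₁, r₂ ∈ ℝ^m, P[r₁ + X ∈ S] ≤ e^{ε·d(r₁,r₂)/Δ} P[r₂ + X ∈ S]. -/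
open MeasureTheory Real

lemma shift_formula {m : ℕ} {Ω : Type*} [MeasurableSpace Ω] (P : Measure Ω)
    (b K : ℝ)
    (X : Ω → EuclideanSpace ℝ (Fin m)) (hX : Measurable X)
    (hlaw : Measure.map X P =
      volume.withDensity (fun x : EuclideanSpace ℝ (Fin m) =>
        ENNReal.ofReal (K * Real.exp (-b * ‖x‖))))
    (S : Set (EuclideanSpace ℝ (Fin m))) (hS : MeasurableSet S)
    (r : EuclideanSpace ℝ (Fin m)) :
    P {ω | r + X ω ∈ S} =
      ∫⁻ y in S, ENNReal.ofReal (K * Real.exp (-b * ‖y - r‖)) := by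
  have hpre : MeasurableSet ((fun x => r + x) ⁻¹' S) := hS.preimage (measurable_const_add r)
  have h1 : {ω | r + X ω ∈ S} = X ⁻¹' ((fun x => r + x) ⁻¹' S) := rfl
  rw [h1, ← Measure.map_apply hX hpre, hlaw, withDensity_apply _ hpre,
    ← lintegral_indicator hpre, ← lintegral_indicator hS]
  set F : EuclideanSpace ℝ (Fin m) → ENNReal :=
    S.indicator (fun y => ENNReal.ofReal (K * Real.exp (-b * ‖y - r‖))) with hF
  have key : ∀ x, ((fun x => r + x) ⁻¹' S).indicator
      (fun x => ENNReal.ofReal (K * Real.exp (-b * ‖x‖))) x = F (r + x) := by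
    intro x
    by_cases hx : r + x ∈ S
    · simp [hF, Set.indicator_of_mem, hx, Set.mem_preimage.mpr hx, add_sub_cancel_left]
    · simp [hF, Set.indicator_of_notMem, hx]
  simp_rw [key]
  exact lintegral_add_left_eq_self F r

/-- If the noise `X` is Laplacian with density `K·e^{-b‖x‖}` and the mechanism
`A(D) = f'(D) + X` is `ε`-differentially private, where the sensitivity `Δ` of `f'` is finite,
positive and attained by some adjacent pair, then Condition 1 holds with degree `ε` and
sensitivity `Δ`. -/
theorem laplacian_dp_implies_condition_one
    {m : ℕ} {Db : Type*} (adj : Db → Db → Prop)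
    (f' : Db → EuclideanSpace ℝ (Fin m))
    (ε Δ b K : ℝ) (hΔ : 0 < Δ) (hb : 0 < b) (hK : 0 < K)
    (hsens : ∀ D₁ D₂, adj D₁ D₂ → dist (f' D₁) (f' D₂) ≤ Δ)
    (hattain : ∃ D₁ D₂, adj D₁ D₂ ∧ dist (f' D₁) (f' D₂) = Δ)
    {Ω : Type*} [MeasurableSpace Ω] (P : Measure Ω) [IsProbabilityMeasure P]
    (X : Ω → EuclideanSpace ℝ (Fin m)) (hX : Measurable X)
    (hlaw : Measure.map X P =
      volume.withDensity (fun x : EuclideanSpace ℝ (Fin m) =>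
        ENNReal.ofReal (K * Real.exp (-b * ‖x‖))))
    (hdp : ∀ D₁ D₂, adj D₁ D₂ → ∀ S : Set (EuclideanSpace ℝ (Fin m)), MeasurableSet S →
      P {ω | f' D₁ + X ω ∈ S} ≤ ENNReal.ofReal (Real.exp ε) * P {ω | f' D₂ + X ω ∈ S}) :
    ∀ S : Set (EuclideanSpace ℝ (Fin m)), MeasurableSet S →
      ∀ r₁ r₂ : EuclideanSpace ℝ (Fin m),
        P {ω | r₁ + X ω ∈ S} ≤
          ENNReal.ofReal (Real.exp (ε * dist r₁ r₂ / Δ)) * P {ω | r₂ + X ω ∈ S} := by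
  -- Step 1 : b * Δ ≤ ε
  obtain ⟨D₁, D₂, hadj, hd⟩ := hattain
  have hbΔ : b * Δ ≤ ε := by
    have hstep : ∀ δ : ℝ, 0 < δ → b * Δ ≤ ε + 2 * b * δ := by
      intro δ hδ
      set S := Metric.closedBall (f' D₁) δ with hSdef
      have hS : MeasurableSet S := measurableSet_closedBall
      have hdp' := hdp D₁ D₂ hadj S hS
      rw [shift_formula P b K X hX hlaw S hS (f' D₁),
          shift_formula P b K X hX hlaw S hS (f' D₂)] at hdp'
      set V := volume S with hV
      have hV0 : V ≠ 0 := (Metric.measure_closedBall_pos volume _ hδ).ne'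
      have hVt : V ≠ ⊤ := (isCompact_closedBall _ _).measure_lt_top.ne
      have hlow : ENNReal.ofReal (K * Real.exp (-b * δ)) * V ≤
          ∫⁻ y in S, ENNReal.ofReal (K * Real.exp (-b * ‖y - f' D₁‖)) := by
        rw [← setLIntegral_const]
        refine setLIntegral_mono' hS fun y hy => ?_
        have h1 : ‖y - f' D₁‖ ≤ δ := by
          simpa [dist_eq_norm] using (Metric.mem_closedBall.mp hy)
        have : -b * δ ≤ -b * ‖y - f' D₁‖ := by nlinarith
        exact ENNReal.ofReal_le_ofReal (by
          have := Real.exp_le_exp.mpr this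
          nlinarith [Real.exp_pos (-b * δ)])
      have hupp : ∫⁻ y in S, ENNReal.ofReal (K * Real.exp (-b * ‖y - f' D₂‖)) ≤
          ENNReal.ofReal (K * Real.exp (-b * (Δ - δ))) * V := by
        rw [← setLIntegral_const]
        refine setLIntegral_mono' hS fun y hy => ?_
        have h1 : ‖y - f' D₁‖ ≤ δ := by
          simpa [dist_eq_norm] using (Metric.mem_closedBall.mp hy)
        have h2 : Δ - δ ≤ ‖y - f' D₂‖ := by
          have := norm_sub_le (f' D₁ - f' D₂) (f' D₁ - y)
          have hD : ‖f' D₁ - f' D₂‖ = Δ := by rw [← dist_eq_norm]; exact hd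
          have : Δ ≤ ‖y - f' D₂‖ + ‖f' D₁ - y‖ := by
            calc Δ = ‖f' D₁ - f' D₂‖ := hD.symm
            _ = ‖(f' D₁ - y) + (y - f' D₂)‖ := by rw [sub_add_sub_cancel]
            _ ≤ ‖f' D₁ - y‖ + ‖y - f' D₂‖ := norm_add_le _ _
            _ = ‖y - f' D₂‖ + ‖f' D₁ - y‖ := by ring
          have h3 : ‖f' D₁ - y‖ ≤ δ := by rwa [norm_sub_rev]
          linarith
        have : -b * ‖y - f' D₂‖ ≤ -b * (Δ - δ) := by nlinarith
        exact ENNReal.ofReal_le_ofReal (by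
          have := Real.exp_le_exp.mpr this
          nlinarith [Real.exp_pos (-b * ‖y - f' D₂‖)])
      have hchain : ENNReal.ofReal (K * Real.exp (-b * δ)) * V ≤
          (ENNReal.ofReal (Real.exp ε) * ENNReal.ofReal (K * Real.exp (-b * (Δ - δ)))) * V := by
        calc ENNReal.ofReal (K * Real.exp (-b * δ)) * V
            ≤ ∫⁻ y in S, ENNReal.ofReal (K * Real.exp (-b * ‖y - f' D₁‖)) := hlow
          _ ≤ ENNReal.ofReal (Real.exp ε) *
              ∫⁻ y in S, ENNReal.ofReal (K * Real.exp (-b * ‖y - f' D₂‖)) := hdp'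
          _ ≤ ENNReal.ofReal (Real.exp ε) *
              (ENNReal.ofReal (K * Real.exp (-b * (Δ - δ))) * V) := by
              exact mul_le_mul_right hupp _
          _ = (ENNReal.ofReal (Real.exp ε) * ENNReal.ofReal (K * Real.exp (-b * (Δ - δ)))) * V := by
              ring
      have hle := (ENNReal.mul_le_mul_iff_left hV0 hVt).mp hchain
      rw [← ENNReal.ofReal_mul (Real.exp_pos ε).le] at hle
      have hreal : K * Real.exp (-b * δ) ≤ Real.exp ε * (K * Real.exp (-b * (Δ - δ))) := by
        have hnn : (0:ℝ) ≤ Real.exp ε * (K * Real.exp (-b * (Δ - δ))) := by positivity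
        have := (ENNReal.ofReal_le_ofReal_iff hnn).mp hle
        linarith
      have hexp : Real.exp (-b * δ) ≤ Real.exp (ε + -b * (Δ - δ)) := by
        rw [Real.exp_add]
        nlinarith [Real.exp_pos ε, Real.exp_pos (-b * (Δ - δ))]
      have := Real.exp_le_exp.mp hexp
      linarith
    by_contra h
    push_neg at h
    have hδ : 0 < (b * Δ - ε) / (4 * b) := div_pos (by linarith) (by linarith)
    have := hstep _ hδ
    have : 2 * b * ((b * Δ - ε) / (4 * b)) = (b * Δ - ε) / 2 := by field_simp; ring
    linarith [hstep _ hδ, this]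
  -- Step 2 : main inequality
  intro S hS r₁ r₂
  rw [shift_formula P b K X hX hlaw S hS r₁, shift_formula P b K X hX hlaw S hS r₂]
  have hc : ENNReal.ofReal (Real.exp (ε * dist r₁ r₂ / Δ)) ≠ ⊤ := ENNReal.ofReal_ne_top
  rw [← lintegral_const_mul' _ _ hc]
  refine setLIntegral_mono' hS fun y _ => ?_
  rw [← ENNReal.ofReal_mul (Real.exp_pos _).le]
  refine ENNReal.ofReal_le_ofReal ?_
  have htri : ‖y - r₁‖ ≥ ‖y - r₂‖ - dist r₁ r₂ := by
    have : ‖y - r₂‖ ≤ ‖y - r₁‖ + ‖r₁ - r₂‖ := by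
      calc ‖y - r₂‖ = ‖(y - r₁) + (r₁ - r₂)‖ := by rw [sub_add_sub_cancel]
        _ ≤ ‖y - r₁‖ + ‖r₁ - r₂‖ := norm_add_le _ _
    rw [dist_eq_norm]; linarith
  have hexp : -b * ‖y - r₁‖ ≤ ε * dist r₁ r₂ / Δ + -b * ‖y - r₂‖ := by
    have hd0 : 0 ≤ dist r₁ r₂ := dist_nonneg
    have h1 : b * dist r₁ r₂ ≤ ε * dist r₁ r₂ / Δ := by
      rw [div_eq_mul_inv]
      have : b ≤ ε / Δ := by
        rw [le_div_iff₀ hΔ]; linarith [hbΔ]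
      calc b * dist r₁ r₂ ≤ (ε / Δ) * dist r₁ r₂ := by nlinarith
        _ = ε * dist r₁ r₂ * Δ⁻¹ := by ring
    nlinarith
  have h := Real.exp_le_exp.mpr hexp
  rw [Real.exp_add] at h
  nlinarith [Real.exp_pos (-b * ‖y - r₁‖), Real.exp_pos (ε * dist r₁ r₂ / Δ),
    Real.exp_pos (-b * ‖y - r₂‖)]
end

section
/- Let X be a random variable on ℝ^m with Laplace density p(x) = K·e^{-b‖x‖} (b > 0, K > 0 the normalizing constant), let ε > 0, and let r₁, r₂ ∈ ℝ^m with ‖r₁ − r₂‖ = Δ > 0. If for every Lebesgue-measurable S ⊆ ℝ^m one has P[r₁ + X ∈ S] ≤ e^{ε} · P[r₂ + X ∈ S], then b ≤ ε/Δ. -/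
open MeasureTheory Real

/-! The law of `r + X` has the translated density `x ↦ K e^{-b‖x - r‖}`. Testing the
privacy inequality on all measurable sets turns it into the almost-everywhere inequality
`K e^{-b‖x - r₁‖} ≤ e^ε K e^{-b‖x - r₂‖}` between densities, which holds everywhere because both
sides are continuous. At `x = r₁` it reads `1 ≤ e^{ε - bΔ}`. -/

theorem le_of_ae_le_of_continuous {X Y : Type*} [TopologicalSpace X] [MeasurableSpace X]
    {μ : Measure X} [μ.IsOpenPosMeasure] [TopologicalSpace Y] [Preorder Y]
    [OrderClosedTopology Y] {f g : X → Y} (h : f ≤ᵐ[μ] g) (hf : Continuous f)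
    (hg : Continuous g) : f ≤ g := by
  have hall : {x | f x ≤ g x} = Set.univ := by
    rw [← (isClosed_le hf hg).closure_eq, (μ.dense_of_ae h).closure_eq]
  exact fun x => (Set.eq_univ_iff_forall.mp hall x :)

theorem le_of_forall_setLIntegral_le_of_continuous {X : Type*} [TopologicalSpace X]
    [MeasurableSpace X] [OpensMeasurableSpace X] {μ : Measure X} [SigmaFinite μ]
    [μ.IsOpenPosMeasure] {f g : X → ENNReal} (hf : Continuous f) (hg : Continuous g)
    (h : ∀ s, MeasurableSet s → ∫⁻ x in s, f x ∂μ ≤ ∫⁻ x in s, g x ∂μ) : f ≤ g :=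
  le_of_ae_le_of_continuous
    (ae_le_of_forall_setLIntegral_le_of_sigmaFinite hf.measurable fun s hs _ => h s hs) hf hg

theorem measure_add_mem_eq_setLIntegral_sub {G Ω : Type*} [AddCommGroup G] [MeasurableSpace G]
    [MeasurableAdd G] {μ : Measure G} [μ.IsAddLeftInvariant] [MeasurableSpace Ω] {P : Measure Ω}
    {X : Ω → G} (hX : Measurable X) {f : G → ENNReal} (hlaw : P.map X = μ.withDensity f)
    (r : G) {S : Set G} (hS : MeasurableSet S) :
    P {ω | r + X ω ∈ S} = ∫⁻ x in S, f (x - r) ∂μ := by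
  have hS' : MeasurableSet ((r + ·) ⁻¹' S) := measurable_const_add r hS
  calc P {ω | r + X ω ∈ S} = P.map X ((r + ·) ⁻¹' S) := (Measure.map_apply hX hS').symm
    _ = ∫⁻ x in (r + ·) ⁻¹' S, f (r + x - r) ∂μ := by
      rw [hlaw, withDensity_apply _ hS']
      simp only [add_sub_cancel_left]
    _ = ∫⁻ x in S, f (x - r) ∂μ :=
      (measurePreserving_add_left μ r).setLIntegral_comp_preimage_emb
        (measurableEmbedding_addLeft r) (fun y => f (y - r)) S

theorem laplacian_dp_scale_bound_general
    {m : ℕ} (ε Δ b K : ℝ) (hK : 0 < K)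
    (r₁ r₂ : EuclideanSpace ℝ (Fin m))
    (hdist : ‖r₁ - r₂‖ = Δ) (hΔ : 0 < Δ)
    {Ω : Type*} [MeasurableSpace Ω] (P : Measure Ω)
    (X : Ω → EuclideanSpace ℝ (Fin m)) (hX : Measurable X)
    (hlaw : Measure.map X P =
      volume.withDensity (fun x : EuclideanSpace ℝ (Fin m) =>
        ENNReal.ofReal (K * Real.exp (-b * ‖x‖))))
    (hdp : ∀ S : Set (EuclideanSpace ℝ (Fin m)), MeasurableSet S →
      P {ω | r₁ + X ω ∈ S} ≤ ENNReal.ofReal (Real.exp ε) * P {ω | r₂ + X ω ∈ S}) :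
    b ≤ ε / Δ := by
  set f : EuclideanSpace ℝ (Fin m) → ℝ := fun x => K * Real.exp (-b * ‖x‖)
  have hdensity : (fun x => ENNReal.ofReal (f (x - r₁))) ≤
      fun x => ENNReal.ofReal (Real.exp ε * f (x - r₂)) := by
    refine le_of_forall_setLIntegral_le_of_continuous (μ := volume)
      (ENNReal.continuous_ofReal.comp (by fun_prop))
      (ENNReal.continuous_ofReal.comp (by fun_prop)) fun S hS => ?_
    simp_rw [ENNReal.ofReal_mul (Real.exp_nonneg ε)]
    rw [lintegral_const_mul' _ _ ENNReal.ofReal_ne_top,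
      ← measure_add_mem_eq_setLIntegral_sub hX hlaw r₁ hS,
      ← measure_add_mem_eq_setLIntegral_sub hX hlaw r₂ hS]
    exact hdp S hS
  have hr₁ : K ≤ K * Real.exp (ε - b * Δ) := by
    have := (ENNReal.ofReal_le_ofReal_iff (by positivity)).mp (hdensity r₁)
    simpa [f, hdist, Real.exp_sub, Real.exp_neg, mul_left_comm, div_eq_mul_inv] using this
  have hexp : 0 ≤ ε - b * Δ := Real.one_le_exp_iff.mp ((le_mul_iff_one_le_right hK).mp hr₁)
  rw [le_div_iff₀ hΔ]
  linarith

/-- If `X` is Laplacian noise with density `K·e^{-b‖x‖}`, and for two points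
`r₁, r₂` at distance `Δ > 0` the `ε`-differential-privacy inequality
`P[r₁ + X ∈ S] ≤ e^ε · P[r₂ + X ∈ S]` holds for every measurable `S`, then `b ≤ ε/Δ`. -/
theorem laplacian_dp_scale_bound
    {m : ℕ} (ε Δ b K : ℝ) (hε : 0 < ε) (hb : 0 < b) (hK : 0 < K)
    (r₁ r₂ : EuclideanSpace ℝ (Fin m))
    (hdist : ‖r₁ - r₂‖ = Δ) (hΔ : 0 < Δ)
    {Ω : Type*} [MeasurableSpace Ω] (P : Measure Ω) [IsProbabilityMeasure P]
    (X : Ω → EuclideanSpace ℝ (Fin m)) (hX : Measurable X)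
    (hlaw : Measure.map X P =
      volume.withDensity (fun x : EuclideanSpace ℝ (Fin m) =>
        ENNReal.ofReal (K * Real.exp (-b * ‖x‖))))
    (hdp : ∀ S : Set (EuclideanSpace ℝ (Fin m)), MeasurableSet S →
      P {ω | r₁ + X ω ∈ S} ≤ ENNReal.ofReal (Real.exp ε) * P {ω | r₂ + X ω ∈ S}) :
    b ≤ ε / Δ :=
  laplacian_dp_scale_bound_general ε Δ b K hK r₁ r₂ hdist hΔ P X hX hlaw hdp
end

section
/- Let X be a random variable on ℝ^m with Laplace density p(x) = K·e^{-b‖x‖} (b > 0, K > 0 the normalizing constant). Then for all r₁, r₂ ∈ ℝ^m and every Lebesgue-measurable S ⊆ ℝ^m, P[r₂ + X ∈ S] ≥ e^{-b·‖r₁−r₂‖} · P[r₁ + X ∈ S]. -/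
open MeasureTheory Real

/-- If `X` is Laplacian noise with density `K·e^{-b‖x‖}`, then for all
`r₁, r₂` and every measurable `S`, `P[r₂ + X ∈ S] ≥ e^{-b‖r₁ - r₂‖} · P[r₁ + X ∈ S]`. -/
theorem laplacian_translation_lower_bound
    {m : ℕ} (b K : ℝ) (hb : 0 < b) (hK : 0 < K)
    {Ω : Type*} [MeasurableSpace Ω] (P : Measure Ω) [IsProbabilityMeasure P]
    (X : Ω → EuclideanSpace ℝ (Fin m)) (hX : Measurable X)
    (hlaw : Measure.map X P =
      volume.withDensity (fun x : EuclideanSpace ℝ (Fin m) =>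
        ENNReal.ofReal (K * Real.exp (-b * ‖x‖))))
    (r₁ r₂ : EuclideanSpace ℝ (Fin m))
    (S : Set (EuclideanSpace ℝ (Fin m))) (hS : MeasurableSet S) :
    ENNReal.ofReal (Real.exp (-b * ‖r₁ - r₂‖)) * P {ω | r₁ + X ω ∈ S} ≤
      P {ω | r₂ + X ω ∈ S} := by
  set f : EuclideanSpace ℝ (Fin m) → ENNReal :=
    fun x => ENNReal.ofReal (K * Real.exp (-b * ‖x‖)) with hf
  have hfm : Measurable f := by
    apply Measurable.ennreal_ofReal
    exact (measurable_norm.const_mul (-b)).exp.const_mul K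
  set c := r₁ - r₂ with hc
  set T₁ : Set (EuclideanSpace ℝ (Fin m)) := (fun x => r₁ + x) ⁻¹' S with hT₁def
  set T₂ : Set (EuclideanSpace ℝ (Fin m)) := (fun x => r₂ + x) ⁻¹' S with hT₂def
  have hT₁ : MeasurableSet T₁ := (measurable_const_add r₁) hS
  have hT₂ : MeasurableSet T₂ := (measurable_const_add r₂) hS
  have h1 : P {ω | r₁ + X ω ∈ S} = ∫⁻ x in T₁, f x := by
    have : {ω | r₁ + X ω ∈ S} = X ⁻¹' T₁ := rfl
    rw [this, ← Measure.map_apply hX hT₁, hlaw, withDensity_apply _ hT₁]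
  have h2 : P {ω | r₂ + X ω ∈ S} = ∫⁻ x in T₂, f x := by
    have : {ω | r₂ + X ω ∈ S} = X ⁻¹' T₂ := rfl
    rw [this, ← Measure.map_apply hX hT₂, hlaw, withDensity_apply _ hT₂]
  rw [h1, h2]
  have hmp : MeasurePreserving (fun x : EuclideanSpace ℝ (Fin m) => x + c)
      volume volume := measurePreserving_add_right volume c
  have hsub : T₁ ⊆ (fun x : EuclideanSpace ℝ (Fin m) => x + c) ⁻¹' T₂ := by
    intro x hx
    have hx' : r₁ + x ∈ S := hx
    show r₂ + (x + c) ∈ S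
    have : r₂ + (x + c) = r₁ + x := by rw [hc]; abel
    rw [this]; exact hx'
  have key : ∫⁻ x in T₁, f (x + c) ≤ ∫⁻ x in T₂, f x := by
    calc ∫⁻ x in T₁, f (x + c)
        ≤ ∫⁻ x in (fun x : EuclideanSpace ℝ (Fin m) => x + c) ⁻¹' T₂, f (x + c) :=
          lintegral_mono_set hsub
      _ = ∫⁻ x in T₂, f x := hmp.setLIntegral_comp_preimage hT₂ hfm
  refine le_trans ?_ key
  rw [← lintegral_const_mul _ hfm]
  apply setLIntegral_mono' hT₁
  intro x _
  simp only [hf]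
  rw [← ENNReal.ofReal_mul (exp_nonneg _)]
  apply ENNReal.ofReal_le_ofReal
  rw [show Real.exp (-b * ‖c‖) * (K * Real.exp (-b * ‖x‖))
      = K * Real.exp (-b * ‖c‖ + -b * ‖x‖) by rw [Real.exp_add]; ring]
  apply mul_le_mul_of_nonneg_left _ hK.le
  apply Real.exp_le_exp.mpr
  have := norm_add_le x c
  nlinarith [hb.le]
end

section
/- Let μ and ν be probability measures on ℝ^m, let ε, Δ, δ_t, L > 0 and R ≥ 0. Assume: (i) μ is absolutely continuous with respect to Lebesgue measure λ and satisfies Condition 1 with degree ε and sensitivity Δ, i.e. for all measurable S and all r₁, r₂ ∈ ℝ^m, μ(S − r₁) ≤ e^{ε·d(r₁,r₂)/Δ}·μ(S − r₂); (ii) there exists a coupling γ of μ and ν with γ({(x,y) : d(x,y) > δ_t}) = 0; (iii) S ⊆ ℝ^m is a countable disjoint union of nonempty measurable sets T_i, each satisfying diam(T_i) ≤ L, 0 < λ(T_i^{-δ_t}) < ∞, and λ(T_i^{+δ_t} \ T_i^{-δ_t}) ≤ R·λ(T_i^{-δ_t}). Then for all r₁, r₂ ∈ ℝ^m with d(r₁,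 r₂) ≤ Δ, ν(S − r₁) ≤ (1 + R·e^{ε(L+δ_t)/Δ})·e^{ε}·ν(S − r₂). In particular, the rounded and truncated mechanism K(D) = r(f'(D) + X') is ε'-differentially private with ε' = ε + ln(1 + R·e^{ε(L+δ_t)/Δ}). -/
open MeasureTheory Real

/-- The `+δ`-neighbor `S^{+δ} = {x | ∃ s ∈ S, d(x,s) ≤ δ}`. -/
def plusNbhd {E : Type*} [PseudoMetricSpace E] (S : Set E) (δ : ℝ) : Set E :=
  {x | ∃ s ∈ S, dist x s ≤ δ}

/-- The `−δ`-neighbor `S^{-δ} = ((Sᶜ)^{+δ})ᶜ = {x | ∀ s, d(x,s) ≤ δ → s ∈ S}`. -/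
def minusNbhd {E : Type*} [PseudoMetricSpace E] (S : Set E) (δ : ℝ) : Set E :=
  {x | ∀ s, dist x s ≤ δ → s ∈ S}



open scoped ENNReal

private lemma fubini_compare {m : ℕ} (μ : Measure (EuclideanSpace ℝ (Fin m))) [IsProbabilityMeasure μ]
    (ε Δ : ℝ) (hε : 0 < ε) (hΔ : 0 < Δ)
    (hcond : ∀ S : Set (EuclideanSpace ℝ (Fin m)), MeasurableSet S →
      ∀ r₁ r₂ : EuclideanSpace ℝ (Fin m),
        μ {x | x + r₁ ∈ S} ≤
          ENNReal.ofReal (Real.exp (ε * dist r₁ r₂ / Δ)) * μ {x | x + r₂ ∈ S})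
    {A B : Set (EuclideanSpace ℝ (Fin m))} (hA : MeasurableSet A) (hB : MeasurableSet B)
    {D : ℝ} (hdist : ∀ a ∈ A, ∀ b ∈ B, dist a b ≤ D)
    (r₁ r₂ : EuclideanSpace ℝ (Fin m)) :
    volume B * μ {x | x + r₁ ∈ A} ≤
      ENNReal.ofReal (Real.exp (ε * (dist r₁ r₂ + D) / Δ)) *
        (volume A * μ {x | x + r₂ ∈ B}) := by
  let E := EuclideanSpace ℝ (Fin m)
  set C : ℝ≥0∞ := ENNReal.ofReal (Real.exp (ε * (dist r₁ r₂ + D) / Δ)) with hC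
  set G : E → Set E := fun v => A ∩ {x | x - v ∈ B} with hG
  have hGmeas : ∀ v, MeasurableSet (G v) := fun v => hA.inter ((measurable_sub_const v) hB)
  set Q₁ : Set (E × E) := {p | p.2 + r₁ ∈ A ∧ p.2 + r₁ - p.1 ∈ B} with hQ₁
  set Q₂ : Set (E × E) := {p | p.2 + r₂ + p.1 ∈ A ∧ p.2 + r₂ ∈ B} with hQ₂
  have mQ₁ : MeasurableSet Q₁ :=
    ((measurable_snd.add_const r₁) hA).inter (((measurable_snd.add_const r₁).sub measurable_fst) hB)
  have mQ₂ : MeasurableSet Q₂ :=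
    (((measurable_snd.add_const r₂).add measurable_fst) hA).inter ((measurable_snd.add_const r₂) hB)
  -- first computation of Q₁
  have e1 : (volume.prod μ) Q₁ = volume B * μ {x | x + r₁ ∈ A} := by
    rw [Measure.prod_apply_symm mQ₁]
    have : ∀ y : E, volume ((fun x => (x, y)) ⁻¹' Q₁)
        = Set.indicator {x : E | x + r₁ ∈ A} (fun _ => volume B) y := by
      intro y
      by_cases hy : y + r₁ ∈ A
      · have : ((fun x => (x, y)) ⁻¹' Q₁) = (fun v => (y + r₁) - v) ⁻¹' B := by
          ext v; simp [hQ₁, hy]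
        rw [this]
        have h2 : (fun v : E => (y + r₁) - v) = (fun w => (y + r₁) + w) ∘ Neg.neg := by
          funext v; simp [sub_eq_add_neg]
        rw [h2, Set.preimage_comp, Measure.measure_preimage_neg, measure_preimage_add,
          Set.indicator_of_mem (show y ∈ {x : E | x + r₁ ∈ A} from hy)]
      · have : ((fun x => (x, y)) ⁻¹' Q₁) = ∅ := by
          ext v; simp [hQ₁, hy]
        rw [this, Set.indicator_of_notMem (show y ∉ {x : E | x + r₁ ∈ A} from hy), measure_empty]
    rw [lintegral_congr this, lintegral_indicator (show MeasurableSet {x : E | x + r₁ ∈ A} from (measurable_add_const r₁) hA) _,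
      setLIntegral_const]
  -- first computation of Q₂
  have e2 : (volume.prod μ) Q₂ = volume A * μ {x | x + r₂ ∈ B} := by
    rw [Measure.prod_apply_symm mQ₂]
    have : ∀ y : E, volume ((fun x => (x, y)) ⁻¹' Q₂)
        = Set.indicator {x : E | x + r₂ ∈ B} (fun _ => volume A) y := by
      intro y
      by_cases hy : y + r₂ ∈ B
      · have : ((fun x => (x, y)) ⁻¹' Q₂) = (fun v => (y + r₂) + v) ⁻¹' A := by
          ext v; simp [hQ₂, hy]
        rw [this, measure_preimage_add, Set.indicator_of_mem (show y ∈ {x : E | x + r₂ ∈ B} from hy)]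
      · have : ((fun x => (x, y)) ⁻¹' Q₂) = ∅ := by
          ext v; simp [hQ₂, hy]
        rw [this, Set.indicator_of_notMem (show y ∉ {x : E | x + r₂ ∈ B} from hy), measure_empty]
    rw [lintegral_congr this, lintegral_indicator (show MeasurableSet {x : E | x + r₂ ∈ B} from (measurable_add_const r₂) hB) _,
      setLIntegral_const]
  -- slices over v
  have s1 : ∀ v : E, (Prod.mk v ⁻¹' Q₁) = {y : E | y + r₁ ∈ G v} := by
    intro v; ext y; simp [hQ₁, hG]
  have s2 : ∀ v : E, (Prod.mk v ⁻¹' Q₂) = {y : E | y + (r₂ + v) ∈ G v} := by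
    intro v; ext y
    simp only [hQ₂, hG, Set.mem_preimage, Set.mem_setOf_eq, Set.mem_inter_iff]
    constructor
    · rintro ⟨h1, h2⟩; exact ⟨by rwa [← add_assoc], by rwa [← add_assoc, add_sub_cancel_right]⟩
    · rintro ⟨h1, h2⟩; rw [← add_assoc] at h1; rw [← add_assoc, add_sub_cancel_right] at h2
      exact ⟨h1, h2⟩
  -- pointwise comparison
  have key : ∀ v : E, μ (Prod.mk v ⁻¹' Q₁) ≤ C * μ (Prod.mk v ⁻¹' Q₂) := by
    intro v
    rw [s1 v, s2 v]
    rcases (G v).eq_empty_or_nonempty with hGe | ⟨a, haA, haB⟩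
    · simp [hGe]
    · have hva : dist r₁ (r₂ + v) ≤ dist r₁ r₂ + D := by
        have h1 : dist a (a - v) ≤ D := hdist a haA (a - v) haB
        have h2 : dist a (a - v) = ‖v‖ := by
          rw [dist_eq_norm]; congr 1; abel
        have h3 : dist r₂ (r₂ + v) = ‖v‖ := by
          have hv : r₂ - (r₂ + v) = -v := by abel
          rw [dist_eq_norm, hv, norm_neg]
        calc dist r₁ (r₂ + v) ≤ dist r₁ r₂ + dist r₂ (r₂ + v) := dist_triangle _ _ _
          _ ≤ dist r₁ r₂ + D := by rw [h3, ← h2]; gcongr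
      refine (hcond (G v) (hGmeas v) r₁ (r₂ + v)).trans ?_
      gcongr
      exact ENNReal.ofReal_le_ofReal <| Real.exp_le_exp.2 <| by gcongr
  calc volume B * μ {x | x + r₁ ∈ A} = (volume.prod μ) Q₁ := e1.symm
    _ = ∫⁻ v, μ (Prod.mk v ⁻¹' Q₁) ∂volume := Measure.prod_apply mQ₁
    _ ≤ ∫⁻ v, C * μ (Prod.mk v ⁻¹' Q₂) ∂volume := lintegral_mono key
    _ = C * ∫⁻ v, μ (Prod.mk v ⁻¹' Q₂) ∂volume := lintegral_const_mul' _ _ ENNReal.ofReal_ne_top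
    _ = C * (volume.prod μ) Q₂ := by rw [← Measure.prod_apply mQ₂]
    _ = C * (volume A * μ {x | x + r₂ ∈ B}) := by rw [e2]

private lemma levelset_null {m : ℕ} (C : Set (EuclideanSpace ℝ (Fin m))) (hC : C.Nonempty)
    {δ : ℝ} (hδ : 0 < δ) :
    volume {x : EuclideanSpace ℝ (Fin m) | Metric.infDist x C = δ} = 0 := by
  rcases subsingleton_or_nontrivial (EuclideanSpace ℝ (Fin m)) with hsub | hnontriv
  · have : {x : EuclideanSpace ℝ (Fin m) | Metric.infDist x C = δ} = ∅ := by
      ext x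
      simp only [Set.mem_setOf_eq, Set.mem_empty_iff_false, iff_false]
      intro hx
      obtain ⟨c, hc⟩ := hC
      have hc' : x ∈ C := (Subsingleton.elim c x) ▸ hc
      rw [Metric.infDist_zero_of_mem hc'] at hx
      exact hδ.ne hx
    rw [this, measure_empty]
  set F : Set (EuclideanSpace ℝ (Fin m)) := {x | Metric.infDist x C = δ} with hF
  by_contra hFne
  -- density point
  have hae := Besicovitch.ae_tendsto_measure_inter_div (volume : Measure (EuclideanSpace ℝ (Fin m))) F
  obtain ⟨x, hxF, hxT⟩ := Measure.exists_mem_of_measure_ne_zero_of_ae hFne hae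
  -- nearest point in the closure of C
  obtain ⟨e, heC, hed⟩ := isClosed_closure.exists_infDist_eq_dist (hC.closure) x
  rw [Metric.infDist_closure] at hed
  have hxe : dist x e = δ := by rw [← hed]; exact hxF
  set d := Module.finrank ℝ (EuclideanSpace ℝ (Fin m)) with hd
  set V := volume (Metric.ball (0 : EuclideanSpace ℝ (Fin m)) 1) with hV
  have hV0 : V ≠ 0 := (Metric.measure_ball_pos volume 0 one_pos).ne'
  have hVt : V ≠ ⊤ := measure_ball_lt_top.ne
  set κ : ℝ≥0∞ := ENNReal.ofReal ((1/2 : ℝ) ^ d) with hκ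
  have hκ0 : κ ≠ 0 := by
    simp only [hκ, ne_eq, ENNReal.ofReal_eq_zero, not_le]
    positivity
  have hκle : ∀ r : ℝ, r ∈ Set.Ioc (0:ℝ) δ →
      volume (F ∩ Metric.closedBall x r) / volume (Metric.closedBall x r) ≤ 1 - κ := by
    intro r hr
    obtain ⟨hr0, hrδ⟩ := hr
    set t : ℝ := r / (2 * δ) with ht
    have ht0 : 0 < t := by positivity
    have ht2 : t ≤ 1/2 := by
      rw [ht, div_le_div_iff₀ (by positivity) (by norm_num)]
      nlinarith
    set y : EuclideanSpace ℝ (Fin m) := x + t • (e - x) with hy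
    have hyx : dist y x = r / 2 := by
      rw [hy, dist_eq_norm]
      have : x + t • (e - x) - x = t • (e - x) := by abel
      rw [this, norm_smul, Real.norm_eq_abs, abs_of_pos ht0]
      have : ‖e - x‖ = δ := by rw [← hxe, dist_eq_norm, norm_sub_rev]
      rw [this, ht]
      field_simp
    have hye : dist y e = (1 - t) * δ := by
      rw [hy, dist_eq_norm]
      have h1 : x + t • (e - x) - e = -((1 - t) • (e - x)) := by
        rw [sub_smul, one_smul]; abel
      rw [h1, norm_neg, norm_smul, Real.norm_eq_abs, abs_of_nonneg (by linarith)]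
      have : ‖e - x‖ = δ := by rw [← hxe, dist_eq_norm, norm_sub_rev]
      rw [this]
    -- the ball around y misses F
    have hmiss : ∀ z ∈ Metric.ball y (r/2), z ∉ F := by
      intro z hz hzF
      have hzF' : Metric.infDist z C = δ := hzF
      have h1 : Metric.infDist z C ≤ dist z e := by
        rw [← Metric.infDist_closure]
        exact Metric.infDist_le_dist_of_mem heC
      have h2 : dist z e ≤ dist z y + dist y e := dist_triangle _ _ _
      have h3 : dist z y < r / 2 := hz
      have h4 : r / 2 = t * δ := by rw [ht]; field_simp
      have h5 : Metric.infDist z C < δ := by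
        calc Metric.infDist z C ≤ dist z y + dist y e := h1.trans h2
        _ < r/2 + (1-t)*δ := by rw [hye]; linarith
        _ = δ := by rw [h4]; ring
      exact h5.ne hzF'
    have hsub2 : Metric.ball y (r/2) ⊆ Metric.closedBall x r := by
      intro z hz
      rw [Metric.mem_closedBall]
      calc dist z x ≤ dist z y + dist y x := dist_triangle _ _ _
        _ ≤ r/2 + r/2 := by
            rw [hyx]
            exact add_le_add (le_of_lt hz) le_rfl
        _ = r := by ring
    -- volume estimates
    have hballvol : volume (Metric.ball y (r/2)) = κ * volume (Metric.closedBall x r) := by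
      rw [Measure.addHaar_ball volume y (by positivity : (0:ℝ) ≤ r/2),
        Measure.addHaar_closedBall volume x hr0.le, hκ]
      rw [← mul_assoc, ← ENNReal.ofReal_mul (by positivity)]
      congr 2
      rw [← hd]
      rw [div_pow, div_pow]
      ring
    have hdisj2 : Disjoint (F ∩ Metric.closedBall x r) (Metric.ball y (r/2)) := by
      rw [Set.disjoint_right]
      intro z hz ⟨hzF, _⟩
      exact hmiss z hz hzF
    have hsumle : volume (F ∩ Metric.closedBall x r) + volume (Metric.ball y (r/2))
        ≤ volume (Metric.closedBall x r) := by
      rw [← measure_union hdisj2 measurableSet_ball]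
      apply measure_mono
      exact Set.union_subset Set.inter_subset_right hsub2
    have hcb0 : volume (Metric.closedBall x r) ≠ 0 :=
      (Metric.measure_closedBall_pos volume x hr0).ne'
    have hcbt : volume (Metric.closedBall x r) ≠ ⊤ := measure_closedBall_lt_top.ne
    rw [hballvol] at hsumle
    have hnum : volume (F ∩ Metric.closedBall x r) ≤
        (1 - κ) * volume (Metric.closedBall x r) := by
      rw [ENNReal.sub_mul (fun _ _ => hcbt), one_mul]
      exact ENNReal.le_sub_of_add_le_right (by
        exact ENNReal.mul_ne_top ENNReal.ofReal_ne_top hcbt) hsumle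
    calc volume (F ∩ Metric.closedBall x r) / volume (Metric.closedBall x r)
        ≤ ((1 - κ) * volume (Metric.closedBall x r)) / volume (Metric.closedBall x r) := by
          exact ENNReal.div_le_div_right hnum _
      _ = (1 - κ) := by
          rw [div_eq_mul_inv, mul_assoc, ENNReal.mul_inv_cancel hcb0 hcbt, mul_one]
  have hev : ∀ᶠ r in nhdsWithin 0 (Set.Ioi 0),
      volume (F ∩ Metric.closedBall x r) / volume (Metric.closedBall x r) ≤ 1 - κ := by
    filter_upwards [Ioc_mem_nhdsGT hδ] with r hr using hκle r hr
  have hle := le_of_tendsto hxT hev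
  have : (1 : ℝ≥0∞) - κ < 1 := ENNReal.sub_lt_self ENNReal.one_ne_top one_ne_zero hκ0
  exact absurd hle (not_le.2 this)

private lemma plus_infinite {m : ℕ} (T : Set (EuclideanSpace ℝ (Fin m)))
    (hT : ¬ Bornology.IsBounded T) {δ : ℝ} (hδ : 0 < δ) :
    volume (plusNbhd T δ) = ⊤ := by
  have hT' : ∀ c : ℝ, ∃ x ∈ T, c < ‖x‖ := by
    intro c
    by_contra h
    push_neg at h
    exact hT (isBounded_iff_forall_norm_le.2 ⟨c, h⟩)
  choose g hg1 hg2 using hT'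
  set f : ℕ → EuclideanSpace ℝ (Fin m) :=
    fun n => Nat.rec (g 0) (fun _ x => g (‖x‖ + 2 * δ)) n with hf
  have hfT : ∀ n, f n ∈ T := by
    intro n; cases n with
    | zero => exact hg1 0
    | succ k => exact hg1 _
  have hstep : ∀ n, ‖f n‖ + 2 * δ < ‖f (n + 1)‖ := fun n => hg2 _
  have hgap : ∀ k n, k < n → ‖f k‖ + 2 * δ < ‖f n‖ := by
    intro k n hkn
    induction n with
    | zero => omega
    | succ p ih =>
      rcases Nat.lt_succ_iff_lt_or_eq.mp hkn with h | h
      · have h1 := ih h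
        have h2 := hstep p
        linarith
      · subst h; exact hstep k
  have hdist : ∀ k n, k ≠ n → 2 * δ < dist (f k) (f n) := by
    have key : ∀ k n, k < n → 2 * δ < dist (f k) (f n) := by
      intro k n hkn
      have h1 := hgap k n hkn
      have h2 : ‖f n‖ - ‖f k‖ ≤ dist (f k) (f n) := by
        rw [dist_eq_norm, norm_sub_rev]
        linarith [norm_sub_norm_le (f n) (f k)]
      linarith
    intro k n hkn
    rcases lt_or_gt_of_ne hkn with h | h
    · exact key k n h
    · rw [dist_comm]; exact key n k h
  have hdisj : Pairwise (Function.onFun Disjoint (fun n => Metric.ball (f n) δ)) := by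
    intro k n hkn
    apply Metric.ball_disjoint_ball
    linarith [hdist k n hkn, dist_comm (f k) (f n)]
  have hsub : (⋃ n, Metric.ball (f n) δ) ⊆ plusNbhd T δ := by
    rintro z hz
    simp only [Set.mem_iUnion, Metric.mem_ball] at hz
    obtain ⟨n, hn⟩ := hz
    exact ⟨f n, hfT n, hn.le⟩
  have hvol : volume (⋃ n, Metric.ball (f n) δ) = ⊤ := by
    rw [measure_iUnion hdisj (fun n => measurableSet_ball)]
    have hconst : ∀ n, volume (Metric.ball (f n) δ) = volume (Metric.ball (0 : EuclideanSpace ℝ (Fin m)) δ) :=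
      fun n => Measure.addHaar_ball_center volume (f n) δ
    rw [tsum_congr hconst]
    exact ENNReal.tsum_const_eq_top_of_ne_zero (Metric.measure_ball_pos volume 0 hδ).ne'
  exact top_le_iff.mp (hvol ▸ measure_mono hsub)

private lemma cell_bound {m : ℕ} (μ : Measure (EuclideanSpace ℝ (Fin m))) [IsProbabilityMeasure μ]
    (ε Δ δt L R : ℝ) (hε : 0 < ε) (hΔ : 0 < Δ) (hδt : 0 < δt) (hL : 0 < L) (hR : 0 ≤ R)
    (hcond : ∀ S : Set (EuclideanSpace ℝ (Fin m)), MeasurableSet S →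
      ∀ r₁ r₂ : EuclideanSpace ℝ (Fin m),
        μ {x | x + r₁ ∈ S} ≤
          ENNReal.ofReal (Real.exp (ε * dist r₁ r₂ / Δ)) * μ {x | x + r₂ ∈ S})
    (T : Set (EuclideanSpace ℝ (Fin m))) (hTne : T.Nonempty) (hTdiam : Metric.diam T ≤ L)
    (hpos : 0 < volume (minusNbhd T δt)) (hfin : volume (minusNbhd T δt) < ⊤)
    (hratio : volume (plusNbhd T δt \ minusNbhd T δt) ≤
      ENNReal.ofReal R * volume (minusNbhd T δt)) :
    ∃ B₀ A₁ : Set (EuclideanSpace ℝ (Fin m)), MeasurableSet B₀ ∧ MeasurableSet A₁ ∧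
      B₀ ⊆ minusNbhd T δt ∧ plusNbhd T δt ⊆ B₀ ∪ A₁ ∧
      ∀ r₁ r₂ : EuclideanSpace ℝ (Fin m), dist r₁ r₂ ≤ Δ →
        μ {x | x + r₁ ∈ B₀ ∪ A₁} ≤
          ENNReal.ofReal ((1 + R * Real.exp (ε * (L + δt) / Δ)) * Real.exp ε) *
            μ {x | x + r₂ ∈ B₀} := by
  classical
  set B : Set (EuclideanSpace ℝ (Fin m)) := minusNbhd T δt with hB
  set P : Set (EuclideanSpace ℝ (Fin m)) := plusNbhd T δt with hP
  set B₀ : Set (EuclideanSpace ℝ (Fin m)) := (Metric.cthickening δt Tᶜ)ᶜ with hB₀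
  have hB₀meas : MeasurableSet B₀ := Metric.isClosed_cthickening.measurableSet.compl
  have hB₀sub : B₀ ⊆ B := by
    intro x hx s hs
    by_contra hsT
    exact hx (Metric.mem_cthickening_of_dist_le x s δt Tᶜ hsT hs)
  have hBsubT : B ⊆ T := fun x hx => hx x (by simp [hδt.le])
  have hBdiff : volume (B \ B₀) = 0 := by
    rcases Set.eq_empty_or_nonempty Tᶜ with hTc | hTc
    · have : B₀ = Set.univ := by rw [hB₀, hTc, Metric.cthickening_empty, Set.compl_empty]
      rw [this]; simp
    · refine measure_mono_null ?_ (levelset_null Tᶜ hTc hδt)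
      intro x hx
      obtain ⟨hxB, hxB₀⟩ := hx
      rw [hB₀, Set.notMem_compl_iff] at hxB₀
      have h1 : EMetric.infEdist x Tᶜ ≤ ENNReal.ofReal δt :=
        Metric.mem_cthickening_iff.mp hxB₀
      have hup : Metric.infDist x Tᶜ ≤ δt := by
        have h2 := ENNReal.toReal_mono ENNReal.ofReal_ne_top h1
        rwa [ENNReal.toReal_ofReal hδt.le] at h2
      have hlow' : ENNReal.ofReal δt ≤ EMetric.infEdist x Tᶜ := by
        apply EMetric.le_infEdist.mpr
        intro y hy
        have hd : δt ≤ dist x y := by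
          by_contra hlt
          push_neg at hlt
          exact hy (hxB y hlt.le)
        calc ENNReal.ofReal δt ≤ ENNReal.ofReal (dist x y) := ENNReal.ofReal_le_ofReal hd
          _ = edist x y := (edist_dist x y).symm
      have hlow : δt ≤ Metric.infDist x Tᶜ := by
        have h2 := ENNReal.toReal_mono (h1.trans_lt ENNReal.ofReal_lt_top).ne hlow'
        rwa [ENNReal.toReal_ofReal hδt.le] at h2
      exact le_antisymm hup hlow
  have le1 : volume B ≤ volume B₀ := by
    calc volume B ≤ volume (B ∩ B₀) + volume (B \ B₀) := measure_le_inter_add_diff _ _ _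
      _ ≤ volume B₀ + 0 := by
          rw [hBdiff]
          exact add_le_add (measure_mono Set.inter_subset_right) le_rfl
      _ = volume B₀ := add_zero _
  have hbdd : Bornology.IsBounded T := by
    by_contra hub
    have h1 : volume P = ⊤ := plus_infinite T hub hδt
    have h2 : volume P < ⊤ := by
      calc volume P ≤ volume (P ∩ B) + volume (P \ B) := measure_le_inter_add_diff _ _ _
        _ ≤ volume B + ENNReal.ofReal R * volume B :=
            add_le_add (measure_mono Set.inter_subset_right) hratio
        _ < ⊤ := ENNReal.add_lt_top.mpr ⟨hfin, ENNReal.mul_lt_top ENNReal.ofReal_lt_top hfin⟩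
    exact h2.ne h1
  set A₁ : Set (EuclideanSpace ℝ (Fin m)) :=
    toMeasurable volume (P \ B₀) ∩ Metric.cthickening δt T with hA₁
  have hA₁meas : MeasurableSet A₁ :=
    (measurableSet_toMeasurable _ _).inter Metric.isClosed_cthickening.measurableSet
  have hPsubthick : P ⊆ Metric.cthickening δt T := by
    rintro x ⟨s, hsT, hds⟩
    exact Metric.mem_cthickening_of_dist_le x s δt T hsT hds
  have hPsub : P ⊆ B₀ ∪ A₁ := by
    intro x hx
    by_cases hxB₀ : x ∈ B₀
    · exact Or.inl hxB₀
    · exact Or.inr ⟨subset_toMeasurable _ _ ⟨hx, hxB₀⟩, hPsubthick hx⟩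
  have hA₁vol : volume A₁ ≤ ENNReal.ofReal R * volume B₀ := by
    calc volume A₁ ≤ volume (toMeasurable volume (P \ B₀)) :=
          measure_mono Set.inter_subset_left
      _ = volume (P \ B₀) := measure_toMeasurable _
      _ ≤ volume ((P \ B) ∪ (B \ B₀)) := by
          apply measure_mono
          intro x ⟨hxP, hxB₀⟩
          by_cases hxB : x ∈ B
          · exact Or.inr ⟨hxB, hxB₀⟩
          · exact Or.inl ⟨hxP, hxB⟩
      _ ≤ volume (P \ B) + volume (B \ B₀) := measure_union_le _ _
      _ = volume (P \ B) := by rw [hBdiff, add_zero]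
      _ ≤ ENNReal.ofReal R * volume B := hratio
      _ ≤ ENNReal.ofReal R * volume B₀ := by exact mul_le_mul_right le1 _
  have hB₀pos : 0 < volume B₀ := hpos.trans_le le1
  have hB₀fin : volume B₀ < ⊤ := (measure_mono hB₀sub).trans_lt hfin
  have hdistAB : ∀ a ∈ A₁, ∀ b ∈ B₀, dist a b ≤ L + δt := by
    intro a ha b hb
    have haT : Metric.infDist a T ≤ δt := by
      have h1 : EMetric.infEdist a T ≤ ENNReal.ofReal δt :=
        Metric.mem_cthickening_iff.mp ha.2
      have h2 := ENNReal.toReal_mono ENNReal.ofReal_ne_top h1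
      rwa [ENNReal.toReal_ofReal hδt.le] at h2
    have hbT : b ∈ T := hBsubT (hB₀sub hb)
    calc dist a b ≤ Metric.infDist a T + Metric.diam T :=
          Metric.dist_le_infDist_add_diam hbdd hbT
      _ ≤ δt + L := add_le_add haT hTdiam
      _ = L + δt := add_comm _ _
  refine ⟨B₀, A₁, hB₀meas, hA₁meas, hB₀sub, hPsub, ?_⟩
  intro r₁ r₂ hr
  have hsplit : μ {x | x + r₁ ∈ B₀ ∪ A₁} ≤ μ {x | x + r₁ ∈ B₀} + μ {x | x + r₁ ∈ A₁} := by
    have : {x : EuclideanSpace ℝ (Fin m) | x + r₁ ∈ B₀ ∪ A₁}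
        = {x | x + r₁ ∈ B₀} ∪ {x | x + r₁ ∈ A₁} := rfl
    rw [this]
    exact measure_union_le _ _
  have hterm1 : μ {x | x + r₁ ∈ B₀} ≤ ENNReal.ofReal (Real.exp ε) * μ {x | x + r₂ ∈ B₀} := by
    refine (hcond B₀ hB₀meas r₁ r₂).trans ?_
    have hee : ε * dist r₁ r₂ / Δ ≤ ε := by
      rw [div_le_iff₀ hΔ]
      nlinarith
    exact mul_le_mul_left (ENNReal.ofReal_le_ofReal (Real.exp_le_exp.2 hee)) _
  have hterm2 : μ {x | x + r₁ ∈ A₁} ≤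
      ENNReal.ofReal (R * Real.exp (ε * (L + δt) / Δ) * Real.exp ε) * μ {x | x + r₂ ∈ B₀} := by
    have hfub := fubini_compare μ ε Δ hε hΔ hcond hA₁meas hB₀meas hdistAB r₁ r₂
    have hexp : Real.exp (ε * (dist r₁ r₂ + (L + δt)) / Δ)
        ≤ Real.exp (ε * (L + δt) / Δ) * Real.exp ε := by
      rw [← Real.exp_add]
      apply Real.exp_le_exp.2
      have h2 : ε * (dist r₁ r₂ + (L + δt)) / Δ ≤ (ε * (L + δt) + ε * Δ) / Δ := by
        gcongr
        nlinarith
      have h3 : (ε * (L + δt) + ε * Δ) / Δ = ε * (L + δt) / Δ + ε := by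
        field_simp
      linarith [h2, h3.le, h3.ge]
    have hchain : volume B₀ * μ {x | x + r₁ ∈ A₁} ≤
        volume B₀ * (ENNReal.ofReal (R * Real.exp (ε * (L + δt) / Δ) * Real.exp ε)
          * μ {x | x + r₂ ∈ B₀}) := by
      calc volume B₀ * μ {x | x + r₁ ∈ A₁}
          ≤ ENNReal.ofReal (Real.exp (ε * (dist r₁ r₂ + (L + δt)) / Δ)) *
            (volume A₁ * μ {x | x + r₂ ∈ B₀}) := hfub
        _ ≤ ENNReal.ofReal (Real.exp (ε * (L + δt) / Δ) * Real.exp ε) *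
            ((ENNReal.ofReal R * volume B₀) * μ {x | x + r₂ ∈ B₀}) := by
            gcongr
        _ = volume B₀ * (ENNReal.ofReal (R * Real.exp (ε * (L + δt) / Δ) * Real.exp ε)
            * μ {x | x + r₂ ∈ B₀}) := by
            rw [show ENNReal.ofReal (R * Real.exp (ε * (L + δt) / Δ) * Real.exp ε)
                = ENNReal.ofReal R * ENNReal.ofReal (Real.exp (ε * (L + δt) / Δ) * Real.exp ε) by
              rw [← ENNReal.ofReal_mul hR, mul_assoc]]
            ring
    exact (ENNReal.mul_le_mul_iff_right hB₀pos.ne' hB₀fin.ne).mp hchain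
  calc μ {x | x + r₁ ∈ B₀ ∪ A₁} ≤ μ {x | x + r₁ ∈ B₀} + μ {x | x + r₁ ∈ A₁} := hsplit
    _ ≤ ENNReal.ofReal (Real.exp ε) * μ {x | x + r₂ ∈ B₀}
        + ENNReal.ofReal (R * Real.exp (ε * (L + δt) / Δ) * Real.exp ε) * μ {x | x + r₂ ∈ B₀} :=
        add_le_add hterm1 hterm2
    _ = (ENNReal.ofReal (Real.exp ε)
        + ENNReal.ofReal (R * Real.exp (ε * (L + δt) / Δ) * Real.exp ε)) * μ {x | x + r₂ ∈ B₀} :=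
        (add_mul _ _ _).symm
    _ = ENNReal.ofReal ((1 + R * Real.exp (ε * (L + δt) / Δ)) * Real.exp ε) *
        μ {x | x + r₂ ∈ B₀} := by
        rw [← ENNReal.ofReal_add (Real.exp_pos _).le (by positivity)]
        congr 1
        ring

/-- main theorem: Let `μ` (law of the exact noise) satisfy Condition 1 with
degree `ε` and sensitivity `Δ`, and let `ν` (law of the implemented noise) be coupled with
`μ` by a coupling concentrated on `{d ≤ δt}`. If `S` is a countable disjoint union of
nonempty measurable rounding cells `T i` of diameter at most `L`, each with
`0 < λ(T i^{-δt}) < ∞` and `λ(T i^{+δt} \ T i^{-δt}) ≤ R·λ(T i^{-δt})`, then for all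
`r₁, r₂` with `d(r₁,r₂) ≤ Δ`,
`ν(S − r₁) ≤ (1 + R·e^{ε(L+δt)/Δ})·e^ε·ν(S − r₂)`; i.e. the rounded, truncated mechanism is
`ε'`-differentially private with `ε' = ε + ln(1 + R·e^{ε(L+δt)/Δ})`. -/
theorem rounded_truncated_mechanism_dp
    {m : ℕ} (μ ν : Measure (EuclideanSpace ℝ (Fin m)))
    [IsProbabilityMeasure μ] [IsProbabilityMeasure ν]
    (ε Δ δt L R : ℝ) (hε : 0 < ε) (hΔ : 0 < Δ) (hδt : 0 < δt) (hL : 0 < L) (hR : 0 ≤ R)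
    (habs : μ ≪ (volume : Measure (EuclideanSpace ℝ (Fin m))))
    (hcond : ∀ S : Set (EuclideanSpace ℝ (Fin m)), MeasurableSet S →
      ∀ r₁ r₂ : EuclideanSpace ℝ (Fin m),
        μ {x | x + r₁ ∈ S} ≤
          ENNReal.ofReal (Real.exp (ε * dist r₁ r₂ / Δ)) * μ {x | x + r₂ ∈ S})
    (γ : Measure (EuclideanSpace ℝ (Fin m) × EuclideanSpace ℝ (Fin m)))
    [IsProbabilityMeasure γ]
    (hfst : Measure.map Prod.fst γ = μ) (hsnd : Measure.map Prod.snd γ = ν)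
    (hnull : γ {p : EuclideanSpace ℝ (Fin m) × EuclideanSpace ℝ (Fin m) | δt < dist p.1 p.2} = 0)
    {ι : Type*} [Countable ι] (T : ι → Set (EuclideanSpace ℝ (Fin m)))
    (S : Set (EuclideanSpace ℝ (Fin m))) (hS : S = ⋃ i, T i)
    (hdisj : Pairwise (Function.onFun Disjoint T))
    (hne : ∀ i, (T i).Nonempty)
    (hmeas : ∀ i, MeasurableSet (T i))
    (hdiam : ∀ i, Metric.diam (T i) ≤ L)
    (hpos : ∀ i, 0 < volume (minusNbhd (T i) δt))
    (hfin : ∀ i, volume (minusNbhd (T i) δt) < ⊤)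
    (hratio : ∀ i, volume (plusNbhd (T i) δt \ minusNbhd (T i) δt) ≤
      ENNReal.ofReal R * volume (minusNbhd (T i) δt)) :
    ∀ r₁ r₂ : EuclideanSpace ℝ (Fin m), dist r₁ r₂ ≤ Δ →
      ν {x | x + r₁ ∈ S} ≤
        ENNReal.ofReal ((1 + R * Real.exp (ε * (L + δt) / Δ)) * Real.exp ε) *
          ν {x | x + r₂ ∈ S} := by
  classical
  intro r₁ r₂ hr
  set K : ℝ≥0∞ := ENNReal.ofReal ((1 + R * Real.exp (ε * (L + δt) / Δ)) * Real.exp ε) with hK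
  choose B₀ A₁ hmB₀ hmA₁ hsubB₀ hsubP hkey using fun i =>
    cell_bound μ ε Δ δt L R hε hΔ hδt hL hR hcond (T i) (hne i) (hdiam i)
      (hpos i) (hfin i) (hratio i)
  have hSmeas : MeasurableSet S := hS ▸ MeasurableSet.iUnion hmeas
  have hSr₁ : MeasurableSet {x : EuclideanSpace ℝ (Fin m) | x + r₁ ∈ S} :=
    (measurable_add_const r₁) hSmeas
  have hSr₂ : MeasurableSet {x : EuclideanSpace ℝ (Fin m) | x + r₂ ∈ S} :=
    (measurable_add_const r₂) hSmeas
  set Kc : Set (EuclideanSpace ℝ (Fin m) × EuclideanSpace ℝ (Fin m)) :=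
    {p | dist p.1 p.2 ≤ δt} with hKc
  have hcompl : ∀ W : Set (EuclideanSpace ℝ (Fin m) × EuclideanSpace ℝ (Fin m)),
      γ W ≤ γ (W ∩ Kc) := by
    intro W
    calc γ W ≤ γ (W ∩ Kc) + γ (W \ Kc) := measure_le_inter_add_diff _ _ _
      _ ≤ γ (W ∩ Kc) + γ {p : EuclideanSpace ℝ (Fin m) × EuclideanSpace ℝ (Fin m) |
            δt < dist p.1 p.2} := by
          gcongr
          intro p hp
          have h2 : ¬ dist p.1 p.2 ≤ δt := hp.2
          exact lt_of_not_ge h2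
      _ = γ (W ∩ Kc) := by rw [hnull, add_zero]
  -- step 1 : ν (S - r₁) as γ
  have step1 : ν {x | x + r₁ ∈ S} = γ {p | p.2 + r₁ ∈ S} := by
    rw [← hsnd, Measure.map_apply measurable_snd hSr₁]
    rfl
  -- each piece of the union
  have step2 : γ ({p : EuclideanSpace ℝ (Fin m) × EuclideanSpace ℝ (Fin m) | p.2 + r₁ ∈ S} ∩ Kc)
      ≤ ∑' i, μ {x | x + r₁ ∈ B₀ i ∪ A₁ i} := by
    have hsub : {p : EuclideanSpace ℝ (Fin m) × EuclideanSpace ℝ (Fin m) | p.2 + r₁ ∈ S} ∩ Kc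
        ⊆ ⋃ i, {p : EuclideanSpace ℝ (Fin m) × EuclideanSpace ℝ (Fin m) |
            p.1 + r₁ ∈ B₀ i ∪ A₁ i} := by
      rintro p ⟨hpS, hpK⟩
      rw [hS] at hpS
      obtain ⟨i, hi⟩ := Set.mem_iUnion.mp hpS
      refine Set.mem_iUnion.mpr ⟨i, ?_⟩
      apply hsubP i
      refine ⟨p.2 + r₁, hi, ?_⟩
      rw [dist_add_right]
      exact hpK
    calc γ _ ≤ γ (⋃ i, {p : EuclideanSpace ℝ (Fin m) × EuclideanSpace ℝ (Fin m) |
          p.1 + r₁ ∈ B₀ i ∪ A₁ i}) := measure_mono hsub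
      _ ≤ ∑' i, γ {p : EuclideanSpace ℝ (Fin m) × EuclideanSpace ℝ (Fin m) |
          p.1 + r₁ ∈ B₀ i ∪ A₁ i} := measure_iUnion_le _
      _ = ∑' i, μ {x | x + r₁ ∈ B₀ i ∪ A₁ i} := by
          apply tsum_congr
          intro i
          rw [← hfst, Measure.map_apply measurable_fst
            (show MeasurableSet {x : EuclideanSpace ℝ (Fin m) | x + r₁ ∈ B₀ i ∪ A₁ i} from
              (measurable_add_const r₁) ((hmB₀ i).union (hmA₁ i)))]
          rfl
  -- apply the per-cell bound
  have step3 : (∑' i, μ {x | x + r₁ ∈ B₀ i ∪ A₁ i}) ≤ K * ∑' i, μ {x | x + r₂ ∈ B₀ i} := by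
    rw [← ENNReal.tsum_mul_left]
    exact ENNReal.tsum_le_tsum fun i => hkey i r₁ r₂ hr
  -- reassemble the union of the B₀'s
  have hdisjB : Pairwise (Function.onFun Disjoint
      (fun i => {x : EuclideanSpace ℝ (Fin m) | x + r₂ ∈ B₀ i})) := by
    intro i j hij
    have h1 : Disjoint (B₀ i) (B₀ j) :=
      ((hdisj hij).mono (fun x hx => (hsubB₀ i hx) x (by simp [hδt.le]))
        (fun x hx => (hsubB₀ j hx) x (by simp [hδt.le])))
    exact Set.disjoint_left.mpr fun x hx hx' =>
      Set.disjoint_left.mp h1 hx hx'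
  have step4 : (∑' i, μ {x | x + r₂ ∈ B₀ i})
      = μ (⋃ i, {x : EuclideanSpace ℝ (Fin m) | x + r₂ ∈ B₀ i}) :=
    (measure_iUnion hdisjB fun i => (measurable_add_const r₂) (hmB₀ i)).symm
  -- transfer back to γ and then to ν
  have step5 : μ (⋃ i, {x : EuclideanSpace ℝ (Fin m) | x + r₂ ∈ B₀ i}) ≤ ν {x | x + r₂ ∈ S} := by
    have hmU : MeasurableSet (⋃ i, B₀ i) := MeasurableSet.iUnion hmB₀
    have h1 : (⋃ i, {x : EuclideanSpace ℝ (Fin m) | x + r₂ ∈ B₀ i})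
        = {x : EuclideanSpace ℝ (Fin m) | x + r₂ ∈ ⋃ i, B₀ i} := by
      ext x; simp
    rw [h1, ← hfst, Measure.map_apply measurable_fst
      (show MeasurableSet {x : EuclideanSpace ℝ (Fin m) | x + r₂ ∈ ⋃ i, B₀ i} from
        (measurable_add_const r₂) hmU)]
    have h2 : (Prod.fst ⁻¹' {x : EuclideanSpace ℝ (Fin m) | x + r₂ ∈ ⋃ i, B₀ i})
        = {p : EuclideanSpace ℝ (Fin m) × EuclideanSpace ℝ (Fin m) | p.1 + r₂ ∈ ⋃ i, B₀ i} := rfl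
    rw [h2]
    refine (hcompl _).trans ?_
    have hsub : {p : EuclideanSpace ℝ (Fin m) × EuclideanSpace ℝ (Fin m) |
        p.1 + r₂ ∈ ⋃ i, B₀ i} ∩ Kc ⊆
        {p : EuclideanSpace ℝ (Fin m) × EuclideanSpace ℝ (Fin m) | p.2 + r₂ ∈ S} := by
      rintro p ⟨hpB, hpK⟩
      obtain ⟨i, hi⟩ := Set.mem_iUnion.mp hpB
      have hmin : p.1 + r₂ ∈ minusNbhd (T i) δt := hsubB₀ i hi
      have : p.2 + r₂ ∈ T i := by
        apply hmin
        rw [dist_add_right]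
        exact hpK
      rw [hS]
      exact Set.mem_iUnion.mpr ⟨i, this⟩
    refine (measure_mono hsub).trans ?_
    rw [← hsnd, Measure.map_apply measurable_snd hSr₂]
    exact le_of_eq rfl
  -- combine everything
  calc ν {x | x + r₁ ∈ S} = γ {p | p.2 + r₁ ∈ S} := step1
    _ ≤ γ ({p : EuclideanSpace ℝ (Fin m) × EuclideanSpace ℝ (Fin m) | p.2 + r₁ ∈ S} ∩ Kc) :=
        hcompl _
    _ ≤ ∑' i, μ {x | x + r₁ ∈ B₀ i ∪ A₁ i} := step2
    _ ≤ K * ∑' i, μ {x | x + r₂ ∈ B₀ i} := step3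
    _ = K * μ (⋃ i, {x : EuclideanSpace ℝ (Fin m) | x + r₂ ∈ B₀ i}) := by rw [step4]
    _ ≤ K * ν {x | x + r₂ ∈ S} := mul_le_mul_right step5 _
end

section
/- Let X be a random variable with values in ℝ^m whose support is bounded (there is M with ‖X‖ ≤ M almost surely), and let r₁, r₂ ∈ ℝ^m with r₁ ≠ r₂. Then there exists a measurable set S ⊆ ℝ^m with P[r₁ + X ∈ S] > 0 and P[r₂ + X ∈ S] = 0. Consequently there is no ε for which P[r₁ + X ∈ S] ≤ e^{ε}·P[r₂ + X ∈ S] holds for all measurable S; i.e. an additive-noise mechanism using noise of bounded support cannot be ε-differentially private for any ε once it must distinguish two distinct true answers. -/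
/-!
Pick a continuous linear functional `ℓ` with `ℓ r₁ > ℓ r₂` (Hahn–Banach). Since `X` is bounded,
`f = ℓ ∘ X` has a finite essential supremum `c`, and `S = {x | ℓ r₂ + c < ℓ x}` works: `r₂ + X ∈ S`
means `f > c`, a null event, while `r₁ + X ∈ S` means `f > c - (ℓ r₁ - ℓ r₂)`, an event of positive
probability by the definition of the essential supremum.
-/

open MeasureTheory Filter

theorem measure_lt_pos_of_lt_essSup {α β : Type*} [MeasurableSpace α]
    [ConditionallyCompleteLinearOrder β] {μ : Measure α} {f : α → β} {x : β}
    (hf : IsCoboundedUnder (· ≤ ·) (ae μ) f) (hx : x < essSup f μ) :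
    0 < μ {y | x < f y} :=
  pos_iff_ne_zero.2 (frequently_ae_iff.1 (frequently_lt_of_lt_limsup hf hx))

theorem exists_measurableSet_separating_translates {Ω E : Type*} [MeasurableSpace Ω]
    [NormedAddCommGroup E] [NormedSpace ℝ E] [MeasurableSpace E] [OpensMeasurableSpace E]
    {μ : Measure Ω} [NeZero μ] {X : Ω → E} {M : ℝ} (hM : ∀ᵐ ω ∂μ, ‖X ω‖ ≤ M)
    {r₁ r₂ : E} (hne : r₁ ≠ r₂) :
    ∃ S : Set E, MeasurableSet S ∧ 0 < μ {ω | r₁ + X ω ∈ S} ∧ μ {ω | r₂ + X ω ∈ S} = 0 := by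
  obtain ⟨ℓ, hℓ, hℓr⟩ := exists_dual_vector ℝ (r₁ - r₂) (norm_ne_zero_iff.2 (sub_ne_zero.2 hne))
  have hgap : 0 < ℓ r₁ - ℓ r₂ := by
    rw [← map_sub, hℓr]
    exact norm_pos_iff.2 (sub_ne_zero.2 hne)
  have hbound : ∀ᵐ ω ∂μ, |ℓ (X ω)| ≤ M := by
    filter_upwards [hM] with ω hω
    calc |ℓ (X ω)| ≤ ‖ℓ‖ * ‖X ω‖ := ℓ.le_opNorm (X ω)
      _ ≤ M := by rwa [hℓ, one_mul]
  have hcobdd : IsCoboundedUnder (· ≤ ·) (ae μ) (fun ω ↦ ℓ (X ω)) :=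
    IsBoundedUnder.isCoboundedUnder_le <| isBoundedUnder_of_eventually_ge (a := -M) <| by
      filter_upwards [hbound] with ω hω using (abs_le.1 hω).1
  set c := essSup (fun ω ↦ ℓ (X ω)) μ
  refine ⟨{x | ℓ r₂ + c < ℓ x}, measurableSet_lt measurable_const ℓ.continuous.measurable, ?_, ?_⟩
  · have hpos := measure_lt_pos_of_lt_essSup hcobdd (sub_lt_self c hgap)
    convert hpos using 2
    ext ω
    simp only [Set.mem_ofPred_eq, map_add]
    constructor <;> intro h <;> linarith
  · have hnull : μ {ω | c < ℓ (X ω)} = 0 := meas_essSup_lt <|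
      isBoundedUnder_of_eventually_le (a := M) <| by
        filter_upwards [hbound] with ω hω using (abs_le.1 hω).2
    simpa only [Set.mem_ofPred_eq, map_add, add_lt_add_iff_left] using hnull

theorem bounded_support_noise_not_dp_general
    {m : ℕ} {Ω : Type*} [MeasurableSpace Ω] (P : Measure Ω) [IsProbabilityMeasure P]
    (X : Ω → EuclideanSpace ℝ (Fin m))
    (M : ℝ) (hM : ∀ᵐ ω ∂P, ‖X ω‖ ≤ M)
    (r₁ r₂ : EuclideanSpace ℝ (Fin m)) (hne : r₁ ≠ r₂) :
    (∃ S : Set (EuclideanSpace ℝ (Fin m)), MeasurableSet S ∧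
      0 < P {ω | r₁ + X ω ∈ S} ∧ P {ω | r₂ + X ω ∈ S} = 0) ∧
    ∀ ε : ℝ, ¬ (∀ S : Set (EuclideanSpace ℝ (Fin m)), MeasurableSet S →
      P {ω | r₁ + X ω ∈ S} ≤ ENNReal.ofReal (Real.exp ε) * P {ω | r₂ + X ω ∈ S}) := by
  obtain ⟨S, hS, hpos, hnull⟩ := exists_measurableSet_separating_translates hM hne
  refine ⟨⟨S, hS, hpos, hnull⟩, fun ε hdp ↦ ?_⟩
  have := hdp S hS
  rw [hnull, mul_zero, nonpos_iff_eq_zero] at this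
  exact hpos.ne' this

/-- If the noise `X` has bounded support (`‖X‖ ≤ M` almost surely) and
`r₁ ≠ r₂`, then there is a measurable set `S` with `P[r₁ + X ∈ S] > 0` and
`P[r₂ + X ∈ S] = 0`; consequently no `ε` makes the additive-noise mechanism
`ε`-differentially private for the pair `r₁, r₂`. -/
theorem bounded_support_noise_not_dp
    {m : ℕ} {Ω : Type*} [MeasurableSpace Ω] (P : Measure Ω) [IsProbabilityMeasure P]
    (X : Ω → EuclideanSpace ℝ (Fin m)) (hX : Measurable X)
    (M : ℝ) (hM : ∀ᵐ ω ∂P, ‖X ω‖ ≤ M)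
    (r₁ r₂ : EuclideanSpace ℝ (Fin m)) (hne : r₁ ≠ r₂) :
    (∃ S : Set (EuclideanSpace ℝ (Fin m)), MeasurableSet S ∧
      0 < P {ω | r₁ + X ω ∈ S} ∧ P {ω | r₂ + X ω ∈ S} = 0) ∧
    ∀ ε : ℝ, ¬ (∀ S : Set (EuclideanSpace ℝ (Fin m)), MeasurableSet S →
      P {ω | r₁ + X ω ∈ S} ≤ ENNReal.ofReal (Real.exp ε) * P {ω | r₂ + X ω ∈ S}) :=
  bounded_support_noise_not_dp_general P X M hM r₁ r₂ hne
end

section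
/- Let b > 0 and D > 0, and define n : (0, 1) → ℝ by n(u) = −b·sgn(u − 1/2)·ln(1 − 2|u − 1/2|). Then on the set U_r = { u ∈ (0,1) : |n(u)| ≤ D } the function n is Lipschitz with constant 2b·e^{D/b}: for all u, v ∈ U_r, |n(u) − n(v)| ≤ 2b·e^{D/b}·|u − v|. -/
open Real

/-- The inverse cumulative function of the (centered) Laplace distribution with scale `b`:
`n(u) = −b·sgn(u − 1/2)·ln(1 − 2|u − 1/2|)`. -/
noncomputable def lapInvCdf (b : ℝ) (u : ℝ) : ℝ :=
  -b * Real.sign (u - 1 / 2) * Real.log (1 - 2 * |u - 1 / 2|)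

lemma log_lip {c x y : ℝ} (hc : 0 < c) (hx : c ≤ x) (hy : c ≤ y) :
    |Real.log x - Real.log y| ≤ (1/c) * |x - y| := by
  wlog h : y ≤ x generalizing x y
  · rw [abs_sub_comm, abs_sub_comm x y]; exact this hy hx (le_of_not_ge h)
  have hy0 : 0 < y := lt_of_lt_of_le hc hy
  have hx0 : 0 < x := lt_of_lt_of_le hc hx
  rw [abs_of_nonneg (sub_nonneg.2 (Real.log_le_log hy0 h)),
      abs_of_nonneg (sub_nonneg.2 h),
      ← Real.log_div (ne_of_gt hx0) (ne_of_gt hy0)]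
  calc Real.log (x/y) ≤ x/y - 1 := Real.log_le_sub_one_of_pos (by positivity)
    _ = (x - y)/y := by field_simp
    _ ≤ (x - y)/c := div_le_div_of_nonneg_left (by linarith) hc hy
    _ = (1/c) * (x - y) := by ring

lemma lapInvCdf_right {b u : ℝ} (hu : 1/2 ≤ u) :
    lapInvCdf b u = -b * Real.log (2 - 2*u) := by
  unfold lapInvCdf
  rcases eq_or_lt_of_le hu with h | h
  · rw [← h]; norm_num
  · rw [abs_of_nonneg (by linarith), Real.sign_of_pos (by linarith)]
    ring_nf

lemma lapInvCdf_symm (b u : ℝ) : lapInvCdf b (1 - u) = -lapInvCdf b u := by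
  unfold lapInvCdf
  have h1 : (1 - u) - 1/2 = -(u - 1/2) := by ring
  rw [h1, abs_neg, Real.sign_neg]; ring

lemma core {b D : ℝ} (hb : 0 < b) (hD : 0 < D) {u v : ℝ}
    (hu1 : 1/2 ≤ u) (hu2 : u < 1) (hv1 : 1/2 ≤ v) (hv2 : v < 1)
    (hnu : |lapInvCdf b u| ≤ D) (hnv : |lapInvCdf b v| ≤ D) :
    |lapInvCdf b u - lapInvCdf b v| ≤ 2 * b * Real.exp (D / b) * |u - v| := by
  rw [lapInvCdf_right hu1, lapInvCdf_right hv1] at *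
  set x := 2 - 2*u with hxdef
  set y := 2 - 2*v with hydef
  have hx0 : 0 < x := by simp [hxdef]; linarith
  have hy0 : 0 < y := by simp [hydef]; linarith
  have hx1 : x ≤ 1 := by simp [hxdef]; linarith
  have hy1 : y ≤ 1 := by simp [hydef]; linarith
  have hlx : Real.log x ≤ 0 := Real.log_nonpos (le_of_lt hx0) hx1
  have hly : Real.log y ≤ 0 := Real.log_nonpos (le_of_lt hy0) hy1
  have hbx : -Real.log x ≤ D / b := by
    rw [abs_mul, abs_of_nonpos (by linarith : -b ≤ (0:ℝ)), abs_of_nonpos hlx] at hnu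
    rw [le_div_iff₀ hb]; nlinarith
  have hby : -Real.log y ≤ D / b := by
    rw [abs_mul, abs_of_nonpos (by linarith : -b ≤ (0:ℝ)), abs_of_nonpos hly] at hnv
    rw [le_div_iff₀ hb]; nlinarith
  have hc : Real.exp (-(D/b)) ≤ x := by
    calc Real.exp (-(D/b)) ≤ Real.exp (Real.log x) := Real.exp_le_exp.2 (by linarith)
      _ = x := Real.exp_log hx0
  have hcy : Real.exp (-(D/b)) ≤ y := by
    calc Real.exp (-(D/b)) ≤ Real.exp (Real.log y) := Real.exp_le_exp.2 (by linarith)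
      _ = y := Real.exp_log hy0
  have hlip := log_lip (Real.exp_pos (-(D/b))) hc hcy
  have key : |Real.log x - Real.log y| ≤ Real.exp (D/b) * |x - y| := by
    rwa [one_div, ← Real.exp_neg, neg_neg] at hlip
  have hxy : |x - y| = 2 * |u - v| := by
    rw [hxdef, hydef, show (2 - 2*u) - (2 - 2*v) = 2*(v - u) by ring, abs_mul,
      abs_sub_comm v u]
    norm_num
  calc |(-b * Real.log x) - (-b * Real.log y)|
      = b * |Real.log x - Real.log y| := by
        rw [show (-b * Real.log x) - (-b * Real.log y) = -b * (Real.log x - Real.log y) by ring,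
          abs_mul, abs_of_nonpos (by linarith : -b ≤ (0:ℝ))]; ring
    _ ≤ b * (Real.exp (D/b) * |x - y|) := by
        exact mul_le_mul_of_nonneg_left key (le_of_lt hb)
    _ = 2 * b * Real.exp (D/b) * |u - v| := by rw [hxy]; ring

/-- On the set `U_r = {u ∈ (0,1) : |n(u)| ≤ D}`, the inverse Laplace cdf
`n` is Lipschitz with constant `2b·e^{D/b}`. -/
theorem lapInvCdf_lipschitz_on_safe_set (b D : ℝ) (hb : 0 < b) (hD : 0 < D) :
    ∀ u ∈ {u : ℝ | u ∈ Set.Ioo (0 : ℝ) 1 ∧ |lapInvCdf b u| ≤ D},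
      ∀ v ∈ {u : ℝ | u ∈ Set.Ioo (0 : ℝ) 1 ∧ |lapInvCdf b u| ≤ D},
        |lapInvCdf b u - lapInvCdf b v| ≤ 2 * b * Real.exp (D / b) * |u - v| := by
  -- left-side version of core
  have coreL : ∀ u v : ℝ, 0 < u → u ≤ 1/2 → 0 < v → v ≤ 1/2 →
      |lapInvCdf b u| ≤ D → |lapInvCdf b v| ≤ D →
      |lapInvCdf b u - lapInvCdf b v| ≤ 2 * b * Real.exp (D / b) * |u - v| := by
    intro u v hu1 hu2 hv1 hv2 hnu hnv
    have h1 : lapInvCdf b u = -lapInvCdf b (1 - u) := by rw [lapInvCdf_symm]; ring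
    have h2 : lapInvCdf b v = -lapInvCdf b (1 - v) := by rw [lapInvCdf_symm]; ring
    have hnu' : |lapInvCdf b (1 - u)| ≤ D := by rw [lapInvCdf_symm, abs_neg]; exact hnu
    have hnv' : |lapInvCdf b (1 - v)| ≤ D := by rw [lapInvCdf_symm, abs_neg]; exact hnv
    rw [h1, h2, show -lapInvCdf b (1-u) - -lapInvCdf b (1-v)
        = -(lapInvCdf b (1-u) - lapInvCdf b (1-v)) by ring, abs_neg]
    have := core hb hD (by linarith : 1/2 ≤ 1 - u) (by linarith : 1 - u < 1)
      (by linarith : 1/2 ≤ 1 - v) (by linarith : 1 - v < 1) hnu' hnv'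
    have heq : |(1 - u) - (1 - v)| = |u - v| := by
      rw [show (1 - u) - (1 - v) = -(u - v) by ring, abs_neg]
    rwa [heq] at this
  have hhalf : lapInvCdf b (1/2 : ℝ) = 0 := by unfold lapInvCdf; norm_num
  have hD' : |lapInvCdf b (1/2 : ℝ)| ≤ D := by rw [hhalf]; simpa using le_of_lt hD
  have mixed : ∀ u v : ℝ, u < 1 → 0 < v → 1/2 ≤ u → v ≤ 1/2 →
      |lapInvCdf b u| ≤ D → |lapInvCdf b v| ≤ D →
      |lapInvCdf b u - lapInvCdf b v| ≤ 2 * b * Real.exp (D / b) * |u - v| := by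
    intro u v hu1 hv0 hu hv hnu hnv
    have h1 := core hb hD hu hu1 (le_refl (1/2:ℝ)) (by norm_num) hnu hD'
    have h2 := coreL (1/2) v (by norm_num) (le_refl _) hv0 hv hD' hnv
    rw [hhalf] at h1 h2
    have habs1 : |u - 1/2| = u - 1/2 := abs_of_nonneg (by linarith)
    have habs2 : |(1:ℝ)/2 - v| = 1/2 - v := abs_of_nonneg (by linarith)
    have habs3 : |u - v| = u - v := abs_of_nonneg (by linarith)
    rw [habs1] at h1; rw [habs2] at h2; rw [habs3]
    calc |lapInvCdf b u - lapInvCdf b v|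
        ≤ |lapInvCdf b u - 0| + |0 - lapInvCdf b v| :=
          abs_sub_le (lapInvCdf b u) 0 (lapInvCdf b v)
      _ ≤ 2*b*Real.exp (D/b)*(u - 1/2) + 2*b*Real.exp (D/b)*(1/2 - v) := add_le_add h1 h2
      _ = 2*b*Real.exp (D/b)*(u - v) := by ring
  rintro u ⟨⟨hu0, hu1⟩, hnu⟩ v ⟨⟨hv0, hv1⟩, hnv⟩
  rcases le_total (1/2 : ℝ) u with hu | hu <;> rcases le_total (1/2 : ℝ) v with hv | hv
  · exact core hb hD hu hu1 hv hv1 hnu hnv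
  · exact mixed u v hu1 hv0 hu hv hnu hnv
  · rw [abs_sub_comm, abs_sub_comm u v]
    exact mixed v u hv1 hu0 hv hu hnv hnu
  · exact coreL u v hu0 hu hv0 hv hnu hnv
end

section
/- Let ε > 0. Let Θ be the uniform probability measure on [−π, π) and let ρ be the probability measure on [0, ∞) with density r ↦ ε²·r·e^{−εr} with respect to Lebesgue measure. Then the pushforward of the product measure Θ ⊗ ρ under the polar-coordinates map (θ, r) ↦ (r·cos θ, r·sin θ) is the probability measure on ℝ² with density (x, y) ↦ (ε²/(2π))·e^{−ε·√(x² + y²)} with respect to two-dimensional Lebesgue measure, i.e. the bivariate Laplace distribution for the Euclidean metric with scale parameter ε. -/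
open MeasureTheory Real Set
open scoped ENNReal

/-! Under polar coordinates Lebesgue measure on the plane becomes `r dr dθ`. Hence a planar
density `(2π)⁻¹ h(|q|)` that depends only on the radius is the law of a uniform angle and an
independent radius with density `r h(r)`; the Laplace distribution is the case
`h(r) = ε² e^{-εr}`. -/

theorem map_polarCoord_symm_withDensity {f : ℝ × ℝ → ℝ≥0∞} (hf : Measurable f) :
    ((volume.restrict polarCoord.target).withDensity
        fun p ↦ ENNReal.ofReal p.1 * f (polarCoord.symm p)).map polarCoord.symm =
      volume.withDensity f := by
  have hsymm : Measurable polarCoord.symm := continuous_polarCoord_symm.measurable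
  refine Measure.ext_of_lintegral _ fun φ hφ ↦ ?_
  rw [lintegral_map hφ hsymm, lintegral_withDensity_eq_lintegral_mul _ (by fun_prop) (by fun_prop),
    lintegral_withDensity_eq_lintegral_mul _ hf hφ, ← lintegral_comp_polarCoord_symm]
  simp only [Pi.mul_apply, smul_eq_mul, mul_assoc]

theorem sqrt_polarCoord_symm {p : ℝ × ℝ} (hp : 0 ≤ p.1) :
    √((polarCoord.symm p).1 ^ 2 + (polarCoord.symm p).2 ^ 2) = p.1 := by
  rw [polarCoord_symm_apply, mul_pow, mul_pow, ← mul_add, cos_sq_add_sin_sq, mul_one,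
    sqrt_sq hp]

theorem map_polarCoord_symm_withDensity_radial {h : ℝ → ℝ≥0∞} (hh : Measurable h) :
    ((volume.restrict polarCoord.target).withDensity
        fun p ↦ ENNReal.ofReal p.1 * h p.1).map polarCoord.symm =
      volume.withDensity fun q ↦ h √(q.1 ^ 2 + q.2 ^ 2) := by
  rw [← map_polarCoord_symm_withDensity (by fun_prop)]
  congr 1
  refine withDensity_congr_ae <| (ae_restrict_iff' polarCoord.open_target.measurableSet).2 <|
    .of_forall fun p hp ↦ ?_
  dsimp only
  rw [sqrt_polarCoord_symm hp.1.le]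

theorem map_polar_uniform_prod_withDensity_radial {h : ℝ → ℝ≥0∞} (hh : Measurable h) :
    Measure.map (fun p : ℝ × ℝ ↦ (p.2 * cos p.1, p.2 * sin p.1))
      (((ENNReal.ofReal (2 * π))⁻¹ • volume.restrict (Ico (-π) π)).prod
        ((volume.restrict (Ici (0 : ℝ))).withDensity fun r ↦ ENNReal.ofReal r * h r)) =
      volume.withDensity fun q ↦ (ENNReal.ofReal (2 * π))⁻¹ * h √(q.1 ^ 2 + q.2 ^ 2) := by
  have hsymm : Measurable polarCoord.symm := continuous_polarCoord_symm.measurable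
  change Measure.map (polarCoord.symm ∘ Prod.swap) _ = _
  rw [Measure.restrict_congr_set Ioo_ae_eq_Ico.symm, Measure.restrict_congr_set Ioi_ae_eq_Ici.symm,
    ← Measure.map_map hsymm measurable_swap, Measure.prod_swap, Measure.prod_smul_right,
    prod_withDensity_left (by fun_prop), Measure.prod_restrict, ← Measure.volume_eq_prod,
    ← polarCoord_target, Measure.map_smul, map_polarCoord_symm_withDensity_radial (by fun_prop),
    ← withDensity_smul _ (by fun_prop)]
  rfl

theorem polar_sampling_gives_bivariate_laplacian_general (ε : ℝ) :
    Measure.map (fun p : ℝ × ℝ => (p.2 * Real.cos p.1, p.2 * Real.sin p.1))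
      (((ENNReal.ofReal (2 * π))⁻¹ • volume.restrict (Set.Ico (-π) π)).prod
        ((volume.restrict (Set.Ici (0 : ℝ))).withDensity
          (fun r : ℝ => ENNReal.ofReal (ε ^ 2 * r * Real.exp (-ε * r))))) =
      volume.withDensity (fun q : ℝ × ℝ =>
        ENNReal.ofReal (ε ^ 2 / (2 * π) * Real.exp (-ε * Real.sqrt (q.1 ^ 2 + q.2 ^ 2)))) := by
  have hρ : (fun r ↦ ENNReal.ofReal (ε ^ 2 * r * exp (-ε * r))) =
      fun r ↦ ENNReal.ofReal r * ENNReal.ofReal (ε ^ 2 * exp (-ε * r)) := by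
    ext r
    rw [← ENNReal.ofReal_mul' (by positivity)]
    ring_nf
  have hdensity : (fun q : ℝ × ℝ ↦
        ENNReal.ofReal (ε ^ 2 / (2 * π) * exp (-ε * √(q.1 ^ 2 + q.2 ^ 2)))) =
      fun q ↦ (ENNReal.ofReal (2 * π))⁻¹ *
        ENNReal.ofReal (ε ^ 2 * exp (-ε * √(q.1 ^ 2 + q.2 ^ 2))) := by
    ext q
    rw [← ENNReal.ofReal_inv_of_pos (by positivity), ← ENNReal.ofReal_mul (by positivity)]
    ring_nf
  rw [hρ, hdensity]
  exact map_polar_uniform_prod_withDensity_radial (by fun_prop)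

/-- Drawing an angle `θ` uniformly in `[−π, π)` and, independently, a radius
`r` with density `ε²·r·e^{−εr}` on `[0, ∞)`, and mapping through polar coordinates
`(θ, r) ↦ (r·cos θ, r·sin θ)`, yields the bivariate (Euclidean) Laplace distribution on
`ℝ²`, with density `(x, y) ↦ (ε²/(2π))·e^{−ε√(x²+y²)}` w.r.t. Lebesgue measure. -/
theorem polar_sampling_gives_bivariate_laplacian (ε : ℝ) (hε : 0 < ε) :
    Measure.map (fun p : ℝ × ℝ => (p.2 * Real.cos p.1, p.2 * Real.sin p.1))
      (((ENNReal.ofReal (2 * π))⁻¹ • volume.restrict (Set.Ico (-π) π)).prod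
        ((volume.restrict (Set.Ici (0 : ℝ))).withDensity
          (fun r : ℝ => ENNReal.ofReal (ε ^ 2 * r * Real.exp (-ε * r))))) =
      volume.withDensity (fun q : ℝ × ℝ =>
        ENNReal.ofReal (ε ^ 2 / (2 * π) * Real.exp (-ε * Real.sqrt (q.1 ^ 2 + q.2 ^ 2)))) :=
  polar_sampling_gives_bivariate_laplacian_general ε
end
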